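/- arXiv:2401.07455 — 2 statements merged into one kernel-verified Lean document; each statement's English description precedes it below -/
import Mathlib

section
/- Suppose the user at position j of the equilibrium profile s^e deviates to a time s′ whose position o′ in the deviated profile satisfies 2 ≤ o′ < j (i.e., the deviator overtakes some users but does not become the first to depart). Then the deviator's new trip cost satisfies C′ > ρ − m(β+γ)/μ; in particular the cost improvement ρ − C′ is strictly less than m(β+γ)/μ, hence strictly less than m(1+γ)/μ. -/
/-- Schedule delay cost function `V(d) = β·max(−d,0) + γ·max(d,0)`. -/
noncomputable def sdc (β γ d : ℝ) : ℝ := β * max (-d) 0 + γ * max d 0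

/-- Destination arrival times: `d 0 = s 0`, `d (k+1) = max (d k + m/μ) (s (k+1))`. -/
noncomputable def arr (m μ : ℝ) (s : ℕ → ℝ) : ℕ → ℝ
  | 0 => s 0
  | k + 1 => max (arr m μ s k + m / μ) (s (k + 1))

/-- Trip cost of the `k`-th departing user. -/
noncomputable def cost (β γ m μ : ℝ) (s : ℕ → ℝ) (k : ℕ) : ℝ :=
  (arr m μ s k - s k) + sdc β γ (arr m μ s k)

/-- A time profile: strictly increasing departure times (0-indexed, users `0,…,P-1`). -/
def IsProfile (P : ℕ) (s : ℕ → ℝ) : Prop := ∀ i, i + 1 < P → s i < s (i + 1)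

/-- Equilibrium departure time of the first user. -/
noncomputable def tminus (P : ℕ) (m μ β γ : ℝ) : ℝ :=
  -(m * ((P : ℝ) - 1) / μ) * (γ / (β + γ))

/-- Equilibrium departure time of the last user. -/
noncomputable def tplus (P : ℕ) (m μ β γ : ℝ) : ℝ :=
  tminus P m μ β γ + m * ((P : ℝ) - 1) / μ

/-- Equilibrium trip cost. -/
noncomputable def rho (P : ℕ) (m μ β γ : ℝ) : ℝ :=
  (m * ((P : ℝ) - 1) / μ) * (β * γ / (β + γ))

/-- The equilibrium profile `s^e` (0-indexed: index `k` is the `(k+1)`-st departing user). -/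
noncomputable def se (P : ℕ) (m μ β γ : ℝ) (k : ℕ) : ℝ :=
  if (k : ℤ) ≤ ⌊γ * ((P : ℝ) - 1) / (β + γ)⌋ then
    tminus P m μ β γ + (m * (1 - β) / μ) * (k : ℝ)
  else
    tminus P m μ β γ + (m * (1 + γ) / μ) * (k : ℝ) - m * γ * ((P : ℝ) - 1) / μ

/-!
Before the deviator's position `o'` the deviated profile coincides with the equilibrium one: two
strictly increasing sequences whose first terms occur in each other agree there, and since
`o' < j` the equilibrium users `0, …, o'` all still depart. The same comparison gives
`s' < s^e_{o'}`. In equilibrium the queue never empties, so user `k` arrives at `t⁻ + k m/μ`;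
the first `o'` users still do, and the deviator, leaving before `s^e_{o'}`, joins the queue and
arrives when user `o'` did in equilibrium. Hence `C' = ρ + (s^e_{o'} - s') > ρ`.
-/

open Set

section SortedEnumeration

variable {α : Type*} [LinearOrder α] {f g : ℕ → α} {N : ℕ}

lemma le_of_eqOn_Iio_of_mem (hf : StrictMonoOn f (Iio N)) (hg : StrictMonoOn g (Iio N))
    {i : ℕ} (hi : i < N) (heq : EqOn f g (Iio i)) (hmem : ∃ l < N, f l = g i) : f i ≤ g i := by
  obtain ⟨l, hlN, hl⟩ := hmem
  by_contra! hlt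
  have hli : l < i := (hf.lt_iff_lt hlN hi).1 (hl ▸ hlt)
  exact hli.ne (hg.injOn hlN hi ((heq hli).symm.trans hl))

lemma eqOn_Iio_of_mutual_mem (hf : StrictMonoOn f (Iio N)) (hg : StrictMonoOn g (Iio N))
    {n : ℕ} (hn : n ≤ N) (hfg : ∀ i < n, ∃ k < N, g k = f i)
    (hgf : ∀ i < n, ∃ k < N, f k = g i) : EqOn f g (Iio n) := by
  intro i
  induction i using Nat.strong_induction_on with
  | _ i ih =>
    intro (hi : i < n)
    have hprefix : EqOn f g (Iio i) := fun l (hl : l < i) => ih l hl (hl.trans hi)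
    exact le_antisymm (le_of_eqOn_Iio_of_mem hf hg (lt_of_lt_of_le hi hn) hprefix (hgf i hi))
      (le_of_eqOn_Iio_of_mem hg hf (lt_of_lt_of_le hi hn) hprefix.symm (hfg i hi))

lemma eqOn_Iio_and_le_of_deviation {e d : ℕ → α} {P j o : ℕ} {s' : α}
    (he : StrictMonoOn e (Iio P)) (hd : StrictMonoOn d (Iio P))
    (hmult : Multiset.map d (Finset.range P).val =
      s' ::ₘ (Multiset.map e (Finset.range P).val).erase (e j))
    (hdo : d o = s') (hoj : o < j) (hj : j < P) :
    EqOn d e (Iio o) ∧ s' ≤ e o := by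
  have hoP : o < P := hoj.trans hj
  have hd_mem : ∀ i < o, ∃ k < P, e k = d i := by
    intro i hi
    have hne : d i ≠ s' := hdo ▸ (hd.injOn.ne (hi.trans hoP) hoP hi.ne)
    have hmem : d i ∈ Multiset.map d (Finset.range P).val :=
      Multiset.mem_map_of_mem d (Finset.mem_range.2 (hi.trans hoP))
    rw [hmult, Multiset.mem_cons, or_iff_right hne] at hmem
    obtain ⟨k, hk, hke⟩ := Multiset.mem_map.1 (Multiset.mem_of_mem_erase hmem)
    exact ⟨k, Finset.mem_range.1 hk, hke⟩
  have he_mem : ∀ k ≤ o, ∃ i < P, d i = e k := by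
    intro k hk
    have hkj : k < j := lt_of_le_of_lt hk hoj
    have hmem : e k ∈ Multiset.map d (Finset.range P).val := by
      rw [hmult, Multiset.mem_cons, Multiset.mem_erase_of_ne (he.injOn.ne (hkj.trans hj) hj hkj.ne)]
      exact Or.inr (Multiset.mem_map_of_mem e (Finset.mem_range.2 (hkj.trans hj)))
    obtain ⟨i, hi, hie⟩ := Multiset.mem_map.1 hmem
    exact ⟨i, Finset.mem_range.1 hi, hie⟩
  have hprefix : EqOn d e (Iio o) := eqOn_Iio_of_mutual_mem hd he hoP.le hd_mem
    (fun k hk => he_mem k hk.le)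
  exact ⟨hprefix, hdo ▸ le_of_eqOn_Iio_of_mem hd he hoP hprefix (he_mem o le_rfl)⟩

end SortedEnumeration

lemma IsProfile.strictMonoOn {P : ℕ} {s : ℕ → ℝ} (hs : IsProfile P s) :
    StrictMonoOn s (Iio P) :=
  strictMonoOn_of_lt_succ ordConnected_Iio fun a _ _ ha => by
    rw [Order.succ_eq_add_one] at ha ⊢
    exact hs a ha

lemma arr_eq_of_le_line {m μ t : ℝ} {s : ℕ → ℝ} {n : ℕ} (h0 : s 0 = t)
    (hle : ∀ k ≤ n, s k ≤ t + k * (m / μ)) : ∀ k ≤ n, arr m μ s k = t + k * (m / μ)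
  | 0, _ => by simp [arr, h0]
  | k + 1, hk => by
    have hs := hle (k + 1) hk
    push_cast at hs ⊢
    rw [arr, arr_eq_of_le_line h0 hle k (by omega), max_eq_left (by linarith)]
    ring

/-- Arrival time of the `k`-th user in equilibrium, where the queue never empties. -/
noncomputable def eqArrival (P : ℕ) (m μ β γ : ℝ) (k : ℕ) : ℝ :=
  tminus P m μ β γ + k * (m / μ)

section Equilibrium

variable {P : ℕ} {m μ β γ : ℝ}

lemma eqArrival_eq (hβγ : β + γ ≠ 0) (k : ℕ) :
    eqArrival P m μ β γ k = m / μ * (β * k - γ * (P - 1 - k)) / (β + γ) := by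
  unfold eqArrival tminus
  field_simp
  ring

/-- The floor in `se` is exactly the test `β k ≤ γ (P - 1 - k)`. -/
lemma se_eq_eqArrival_sub_min (hβγ : 0 < β + γ) (k : ℕ) :
    se P m μ β γ k = eqArrival P m μ β γ k - m / μ * min (β * k) (γ * (P - 1 - k)) := by
  have hcond : (k : ℤ) ≤ ⌊γ * ((P : ℝ) - 1) / (β + γ)⌋ ↔ β * k ≤ γ * (P - 1 - k) := by
    rw [Int.le_floor, Int.cast_natCast, le_div_iff₀ hβγ]
    constructor <;> intro h <;> linarith
  unfold se eqArrival
  split_ifs with h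
  · rw [min_eq_left (hcond.1 h)]
    ring
  · rw [min_eq_right (not_le.1 (mt hcond.2 h)).le]
    ring

lemma se_strictMono (hm : 0 < m) (hμ : 0 < μ) (hβ : 0 < β) (hβ1 : β < 1) (hγ : 0 < γ) :
    StrictMono (se P m μ β γ) := by
  refine strictMono_nat_of_lt_succ fun k => ?_
  have hβγ : 0 < β + γ := add_pos hβ hγ
  have hmin : min (β * (k + 1 : ℕ)) (γ * (P - 1 - (k + 1 : ℕ))) ≤
      min (β * k) (γ * (P - 1 - k)) + β := by
    rw [← min_add_add_right]
    push_cast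
    exact min_le_min (by linarith) (by linarith)
  have hstep : 0 < m / μ * (1 - β) := mul_pos (div_pos hm hμ) (by linarith)
  rw [se_eq_eqArrival_sub_min hβγ, se_eq_eqArrival_sub_min hβγ]
  unfold eqArrival
  push_cast at hmin ⊢
  linarith [mul_le_mul_of_nonneg_left hmin (div_pos hm hμ).le]

lemma se_le_eqArrival (hm : 0 < m) (hμ : 0 < μ) (hβ : 0 < β) (hγ : 0 < γ) {k : ℕ}
    (hk : k < P) : se P m μ β γ k ≤ eqArrival P m μ β γ k := by
  have hkP : (k : ℝ) + 1 ≤ P := by exact_mod_cast hk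
  rw [se_eq_eqArrival_sub_min (add_pos hβ hγ)]
  exact sub_le_self _ (mul_nonneg (div_pos hm hμ).le
    (le_min (by positivity) (mul_nonneg hγ.le (by linarith))))

lemma se_zero (hβ : 0 < β) (hγ : 0 < γ) (hP : 0 < P) : se P m μ β γ 0 = tminus P m μ β γ := by
  have hP1 : (1 : ℝ) ≤ P := by exact_mod_cast hP
  rw [se_eq_eqArrival_sub_min (add_pos hβ hγ), Nat.cast_zero, mul_zero,
    min_eq_left (mul_nonneg hγ.le (by linarith))]
  simp [eqArrival]

lemma mul_min_add_sdc {c a b : ℝ} (hc : 0 ≤ c) (hβγ : 0 < β + γ) :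
    c * min a b + sdc β γ (c * (a - b) / (β + γ)) = c * (γ * a + β * b) / (β + γ) := by
  unfold sdc
  rcases le_total a b with hab | hab
  · have hneg : c * (a - b) / (β + γ) ≤ 0 :=
      div_nonpos_of_nonpos_of_nonneg (mul_nonpos_of_nonneg_of_nonpos hc (by linarith)) hβγ.le
    rw [min_eq_left hab, max_eq_left (by linarith), max_eq_right hneg]
    field_simp
    ring
  · have hpos : 0 ≤ c * (a - b) / (β + γ) :=
      div_nonneg (mul_nonneg hc (by linarith)) hβγ.le
    rw [min_eq_right hab, max_eq_right (by linarith), max_eq_left hpos]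
    field_simp
    ring

lemma eqArrival_sub_se_add_sdc (hm : 0 < m) (hμ : 0 < μ) (hβ : 0 < β) (hγ : 0 < γ) (k : ℕ) :
    eqArrival P m μ β γ k - se P m μ β γ k + sdc β γ (eqArrival P m μ β γ k) =
      rho P m μ β γ := by
  have hβγ : 0 < β + γ := add_pos hβ hγ
  rw [se_eq_eqArrival_sub_min hβγ, sub_sub_cancel, eqArrival_eq hβγ.ne', mul_div_assoc,
    ← mul_div_assoc, mul_min_add_sdc (div_pos hm hμ).le hβγ]
  unfold rho
  field_simp
  ring

lemma cost_eq_rho_add_of_eqOn_Iio (hm : 0 < m) (hμ : 0 < μ) (hβ : 0 < β) (hγ : 0 < γ)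
    {s : ℕ → ℝ} {o : ℕ} (ho : 0 < o) (hoP : o < P) (hprefix : EqOn s (se P m μ β γ) (Iio o))
    (hle : s o ≤ se P m μ β γ o) :
    cost β γ m μ s o = rho P m μ β γ + (se P m μ β γ o - s o) := by
  have h0 : s 0 = tminus P m μ β γ := (hprefix ho).trans (se_zero hβ hγ (ho.trans hoP))
  have hline : ∀ k ≤ o, s k ≤ eqArrival P m μ β γ k := by
    intro k hk
    rcases hk.lt_or_eq with hk | rfl
    · rw [hprefix hk]
      exact se_le_eqArrival hm hμ hβ hγ (hk.trans hoP)
    · exact hle.trans (se_le_eqArrival hm hμ hβ hγ hoP)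
  have harr : arr m μ s o = eqArrival P m μ β γ o := arr_eq_of_le_line h0 hline o le_rfl
  unfold cost
  rw [harr]
  linarith [eqArrival_sub_se_add_sdc (P := P) hm hμ hβ hγ o]

end Equilibrium

theorem deviation_overtaking_bound_general (P : ℕ) (m μ β γ : ℝ)
    (hm : 0 < m) (hμ : 0 < μ)
    (hβ : 0 < β) (hβ1 : β < 1) (hγ : 0 < γ)
    (j : ℕ) (hj : j < P) (s' : ℝ)
    (hs' : ∀ k, k < P → k ≠ j → s' ≠ se P m μ β γ k)
    (sd : ℕ → ℝ) (hsd : IsProfile P sd)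
    (hmult : Multiset.map sd (Finset.range P).val =
      s' ::ₘ (Multiset.map (se P m μ β γ) (Finset.range P).val).erase (se P m μ β γ j))
    (o' : ℕ) (hso' : sd o' = s')
    (ho1 : 1 ≤ o') (ho2 : o' < j) :
    rho P m μ β γ - m * (β + γ) / μ < cost β γ m μ sd o' ∧
    rho P m μ β γ - cost β γ m μ sd o' < m * (β + γ) / μ ∧
    rho P m μ β γ - cost β γ m μ sd o' < m * (1 + γ) / μ := by
  have ho'P : o' < P := ho2.trans hj
  obtain ⟨hprefix, hle⟩ := eqOn_Iio_and_le_of_deviation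
    ((se_strictMono hm hμ hβ hβ1 hγ).strictMonoOn _) hsd.strictMonoOn hmult hso' ho2 hj
  have hlt : s' < se P m μ β γ o' := lt_of_le_of_ne hle (hs' o' ho'P ho2.ne)
  have hcost := cost_eq_rho_add_of_eqOn_Iio hm hμ hβ hγ ho1 ho'P hprefix (hso' ▸ hle)
  rw [hso'] at hcost
  have hgap : 0 < m * (β + γ) / μ := by positivity
  have hgap' : m * (β + γ) / μ < m * (1 + γ) / μ := by gcongr
  exact ⟨by linarith, by linarith, by linarith⟩

theorem deviation_overtaking_bound (P : ℕ) (hP : 2 ≤ P) (m μ β γ : ℝ)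
    (hm : 0 < m) (hm1 : m ≤ 1) (hμ : 0 < μ)
    (hβ : 0 < β) (hβ1 : β < 1) (hγ : 0 < γ)
    (j : ℕ) (hj : j < P) (s' : ℝ)
    (hs' : ∀ k, k < P → k ≠ j → s' ≠ se P m μ β γ k)
    (sd : ℕ → ℝ) (hsd : IsProfile P sd)
    (hmult : Multiset.map sd (Finset.range P).val =
      s' ::ₘ (Multiset.map (se P m μ β γ) (Finset.range P).val).erase (se P m μ β γ j))
    (o' : ℕ) (hso' : sd o' = s')
    (ho1 : 1 ≤ o') (ho2 : o' < j) :
    rho P m μ β γ - m * (β + γ) / μ < cost β γ m μ sd o' ∧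
    rho P m μ β γ - cost β γ m μ sd o' < m * (β + γ) / μ ∧
    rho P m μ β γ - cost β γ m μ sd o' < m * (1 + γ) / μ :=
  deviation_overtaking_bound_general P m μ β γ hm hμ hβ hβ1 hγ j hj s' hs' sd hsd hmult o' hso' ho1
    ho2
end

section
/- Let s be a grid profile whose earliest departure time s_1 satisfies s_1 ≠ t⁻. Then there exists a better response path from s to a grid profile s′ such that: (i) if s_1 < t⁻, then the earliest departure time of s′ is strictly later than s_1; and (ii) if t⁻ < s_1, then the earliest departure time of s′ equals t⁻. -/
/-- The forecasted cost `Ĉ(t | s) = c`, as a relation (the cases are mutually exclusive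
for `t` distinct from all departure times of the strictly increasing profile `s`). -/
def Forecast (P : ℕ) (β γ m μ : ℝ) (s : ℕ → ℝ) (t c : ℝ) : Prop :=
  (∃ k, k + 1 < P ∧ s k < t ∧ t < s (k + 1) ∧
      arr m μ s (k + 1) - arr m μ s k = m / μ ∧
      c = cost β γ m μ s k +
        (cost β γ m μ s (k + 1) - cost β γ m μ s k) / (s (k + 1) - s k) * (t - s k)) ∨
  (∃ k, k + 1 < P ∧ s k < t ∧ t < s (k + 1) ∧
      m / μ < arr m μ s (k + 1) - arr m μ s k ∧
      ((t ≤ arr m μ s k ∧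
          c = cost β γ m μ s k +
            (sdc β γ (arr m μ s k) - cost β γ m μ s k) / (arr m μ s k - s k) * (t - s k)) ∨
        (arr m μ s k < t ∧ c = sdc β γ t))) ∨
  (s (P - 1) < t ∧ t < arr m μ s (P - 1) ∧
      c = cost β γ m μ s (P - 1) +
        (sdc β γ (arr m μ s (P - 1)) - cost β γ m μ s (P - 1)) /
          (arr m μ s (P - 1) - s (P - 1)) * (t - s (P - 1))) ∨
  ((t < s 0 ∨ arr m μ s (P - 1) ≤ t) ∧ c = sdc β γ t)

/-- Departure times lie on the grid of integer multiples of `Δs` within `[-S, S]`. -/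
def OnGrid (P : ℕ) (Δs S : ℝ) (s : ℕ → ℝ) : Prop :=
  ∀ k, k < P → (∃ z : ℤ, s k = (z : ℝ) * Δs) ∧ -S ≤ s k ∧ s k ≤ S

/-- A grid profile. -/
def GridProfile (P : ℕ) (Δs S : ℝ) (s : ℕ → ℝ) : Prop :=
  IsProfile P s ∧ OnGrid P Δs S s

/-- One better response: the user at departure order `j` of `s` moves to the new time `t`
(whose forecasted cost in `s` is strictly below that user's current trip cost); `s'` is
the resulting profile, i.e. its departure times are those of `s` with `s j` replaced by `t`. -/
def BetterStep (P : ℕ) (β γ m μ : ℝ) (s s' : ℕ → ℝ) (j : ℕ) (t : ℝ) : Prop :=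
  j < P ∧ (∀ k, k < P → s k ≠ t) ∧
  (∃ c, Forecast P β γ m μ s t c ∧ c < cost β γ m μ s j) ∧
  Multiset.map s' (Finset.range P).val =
    t ::ₘ (Multiset.map s (Finset.range P).val).erase (s j)

/-- A better response path between grid profiles. -/
def BRPath (P : ℕ) (β γ m μ Δs S : ℝ) (s s' : ℕ → ℝ) : Prop :=
  ∃ (N : ℕ) (f : ℕ → ℕ → ℝ), f 0 = s ∧ f N = s' ∧
    (∀ i, i ≤ N → GridProfile P Δs S (f i)) ∧
    ∀ i, i < N → ∃ j t, BetterStep P β γ m μ (f i) (f (i + 1)) j t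

/-!
Users are indexed from `0`. If user `0` departs before `t⁻`, let users `0, …, r` be the
initial run that the bottleneck serves back to back. User `0` moves to the grid time just after
`d_r`: it lies in the idle gap after `d_r` (or after `d_{P-1}`), where the forecast is the bare
schedule delay `V`, and it is at most `t⁺`, where `γ t⁺ = -β t⁻ = V(t⁻) < V(s_0)`.
If user `0` departs after `t⁻`, the last user moves to `t⁻`, ahead of everyone. Its forecast
there is `V(t⁻) = γ t⁺`, while it currently arrives after `s_0 + (P-1) m/μ > t⁺` and so pays
more than `γ t⁺`.
-/

section ScheduleDelay

variable {β γ a b : ℝ}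

lemma sdc_of_nonpos (h : a ≤ 0) : sdc β γ a = -(β * a) := by
  rw [sdc, max_eq_left (neg_nonneg.2 h), max_eq_right h]
  ring

lemma sdc_of_nonneg (h : 0 ≤ a) : sdc β γ a = γ * a := by
  rw [sdc, max_eq_right (neg_nonpos.2 h), max_eq_left h]
  ring

lemma mul_le_sdc (hβ : 0 ≤ β) (hγ : 0 ≤ γ) : γ * a ≤ sdc β γ a := by
  unfold sdc
  nlinarith [le_max_left a 0, mul_nonneg hβ (le_max_right (-a) 0)]

lemma sdc_lt_sdc (hβ : 0 < β) (ha : a ≤ 0) (hab : a < b) (hb : γ * b < -(β * a)) :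
    sdc β γ b < sdc β γ a := by
  rw [sdc_of_nonpos ha]
  rcases le_total b 0 with hb0 | hb0
  · rw [sdc_of_nonpos hb0]
    nlinarith
  · rwa [sdc_of_nonneg hb0]

end ScheduleDelay

section Arrivals

variable {β γ m μ : ℝ} {s : ℕ → ℝ}

lemma le_arr : ∀ k, s k ≤ arr m μ s k
  | 0 => le_rfl
  | _ + 1 => le_max_right _ _

lemma arr_add_le_arr_succ (k : ℕ) : arr m μ s k + m / μ ≤ arr m μ s (k + 1) :=
  le_max_left _ _

lemma arr_succ_eq_of_gap {k : ℕ} (h : arr m μ s k + m / μ < arr m μ s (k + 1)) :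
    arr m μ s (k + 1) = s (k + 1) :=
  (max_choice _ _).resolve_left h.ne'

lemma add_mul_le_arr (k : ℕ) : s 0 + k * (m / μ) ≤ arr m μ s k := by
  induction k with
  | zero => simp [arr]
  | succ k ih =>
    push_cast
    linarith [arr_add_le_arr_succ (m := m) (μ := μ) (s := s) k]

lemma cost_zero : cost β γ m μ s 0 = sdc β γ (s 0) := by
  simp [cost, arr]

lemma mul_arr_le_cost (hβ : 0 ≤ β) (hγ : 0 ≤ γ) (k : ℕ) :
    γ * arr m μ s k ≤ cost β γ m μ s k := by
  unfold cost
  linarith [le_arr (m := m) (μ := μ) (s := s) k, mul_le_sdc (a := arr m μ s k) hβ hγ]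

end Arrivals

section Grid

variable {Δs : ℝ}

lemma add_le_of_lt_of_grid (hΔs : 0 < Δs) {a b : ℝ} (ha : ∃ z : ℤ, a = z * Δs)
    (hb : ∃ z : ℤ, b = z * Δs) (h : a < b) : a + Δs ≤ b := by
  obtain ⟨x, rfl⟩ := ha
  obtain ⟨y, rfl⟩ := hb
  have hxy : x < y := by exact_mod_cast lt_of_mul_lt_mul_right h hΔs.le
  have : (x : ℝ) + 1 ≤ y := by exact_mod_cast hxy
  nlinarith

lemma exists_arr_eq_int_mul {m μ : ℝ} {s : ℕ → ℝ} (hm : ∃ z : ℤ, m / μ = z * Δs) :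
    ∀ k, (∀ i ≤ k, ∃ z : ℤ, s i = z * Δs) → ∃ z : ℤ, arr m μ s k = z * Δs
  | 0, hs => hs 0 le_rfl
  | k + 1, hs => by
    obtain ⟨x, hx⟩ := exists_arr_eq_int_mul hm k fun i hi => hs i (hi.trans k.le_succ)
    obtain ⟨y, hy⟩ := hm
    rcases max_choice (arr m μ s k + m / μ) (s (k + 1)) with h | h
    · exact ⟨x + y, by rw [arr, h, hx, hy]; push_cast; ring⟩
    · rw [arr, h]
      exact hs (k + 1) le_rfl

end Grid

namespace IsProfile

variable {P : ℕ} {s : ℕ → ℝ}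

lemma lt_of_lt (h : IsProfile P s) {i j : ℕ} (hij : i < j) (hj : j < P) : s i < s j := by
  induction j, hij using Nat.le_induction with
  | base => exact h i hj
  | succ j hij ih => exact (ih (by omega)).trans (h j hj)

lemma le_of_le (h : IsProfile P s) {i j : ℕ} (hij : i ≤ j) (hj : j < P) : s i ≤ s j := by
  rcases hij.eq_or_lt with rfl | hij
  · exact le_rfl
  · exact (h.lt_of_lt hij hj).le

end IsProfile

section Moves

variable {α : Type*}

def prependSeq (a : α) (s : ℕ → α) (k : ℕ) : α :=
  if k = 0 then a else s (k - 1)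

def moveFirstTo (s : ℕ → α) (r : ℕ) (a : α) (k : ℕ) : α :=
  if k < r then s (k + 1) else if k = r then a else s k

lemma map_prependSeq_range_succ [DecidableEq α] (a : α) (s : ℕ → α) (n : ℕ) :
    (Multiset.range (n + 1)).map (prependSeq a s) =
      a ::ₘ ((Multiset.range (n + 1)).map s).erase (s n) := by
  conv_rhs => rw [Multiset.range_succ, Multiset.map_cons, Multiset.erase_cons_head]
  rw [add_comm, Multiset.range_add, Multiset.map_add, Multiset.map_map]
  simp [prependSeq, Function.comp_def]

lemma map_moveFirstTo_range [DecidableEq α] (s : ℕ → α) {r n : ℕ} (hr : r < n) (a : α) :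
    (Multiset.range n).map (moveFirstTo s r a) =
      a ::ₘ ((Multiset.range n).map s).erase (s 0) := by
  obtain ⟨q, rfl⟩ : ∃ q, n = r + 1 + q := ⟨n - (r + 1), by omega⟩
  have hlow : (Multiset.range r).map (moveFirstTo s r a) = (Multiset.range r).map (s ·.succ) :=
    Multiset.map_congr rfl fun k hk => if_pos (Multiset.mem_range.1 hk)
  conv_rhs => rw [show r + 1 + q = 1 + (r + q) by omega, Multiset.range_add, Multiset.range_add]
  rw [Multiset.range_add, Multiset.range_succ]
  simp [Multiset.map_add, Multiset.map_map, Function.comp_def, hlow, moveFirstTo, add_comm,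
    add_left_comm, add_assoc]

end Moves

section ProfileMoves

variable {P : ℕ} {Δs S t : ℝ} {s : ℕ → ℝ}

lemma IsProfile.prependSeq (h : IsProfile P s) (ht : t < s 0) :
    IsProfile P (prependSeq t s) := by
  rintro (_ | i) hi
  · simpa [_root_.prependSeq] using ht
  · simpa [_root_.prependSeq] using h i (by omega)

lemma IsProfile.moveFirstTo (h : IsProfile P s) {r : ℕ} (hr : r < P) (hlo : s r < t)
    (hhi : r + 1 < P → t < s (r + 1)) : IsProfile P (moveFirstTo s r t) := by
  intro i hi
  rcases lt_trichotomy (i + 1) r with hir | rfl | hir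
  · have hi' : i < r := by omega
    simpa [_root_.moveFirstTo, hir, hi'] using h (i + 1) (by omega)
  · simpa [_root_.moveFirstTo] using hlo
  · rcases (Nat.lt_succ_iff.mp hir).eq_or_lt with rfl | hri
    · simpa [_root_.moveFirstTo] using hhi hi
    · have h1 : ¬ i < r := by omega
      have h2 : ¬ i + 1 < r := by omega
      have h3 : i + 1 ≠ r := by omega
      simpa [_root_.moveFirstTo, h1, h2, hri.ne', h3] using h i hi

lemma OnGrid.prependSeq (h : OnGrid P Δs S s)
    (ht : (∃ z : ℤ, t = z * Δs) ∧ -S ≤ t ∧ t ≤ S) : OnGrid P Δs S (prependSeq t s) := by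
  rintro (_ | k) hk
  · simpa [_root_.prependSeq] using ht
  · simpa [_root_.prependSeq] using h k (by omega)

lemma OnGrid.moveFirstTo (h : OnGrid P Δs S s) {r : ℕ} (hr : r < P)
    (ht : (∃ z : ℤ, t = z * Δs) ∧ -S ≤ t ∧ t ≤ S) : OnGrid P Δs S (moveFirstTo s r t) := by
  intro k hk
  unfold _root_.moveFirstTo
  split_ifs with hkr
  · exact h (k + 1) (by omega)
  · exact ht
  · exact h k hk

end ProfileMoves

section Forecast

variable {P : ℕ} {β γ m μ t : ℝ} {s : ℕ → ℝ}

lemma forecast_of_lt_first (ht : t < s 0) : Forecast P β γ m μ s t (sdc β γ t) :=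
  Or.inr <| Or.inr <| Or.inr ⟨Or.inl ht, rfl⟩

lemma forecast_of_arr_last_le (ht : arr m μ s (P - 1) ≤ t) :
    Forecast P β γ m μ s t (sdc β γ t) :=
  Or.inr <| Or.inr <| Or.inr ⟨Or.inr ht, rfl⟩

lemma forecast_of_mem_gap {k : ℕ} (hk : k + 1 < P)
    (hgap : m / μ < arr m μ s (k + 1) - arr m μ s k) (hlo : arr m μ s k < t)
    (hhi : t < s (k + 1)) : Forecast P β γ m μ s t (sdc β γ t) :=
  Or.inr <| Or.inl ⟨k, hk, (le_arr k).trans_lt hlo, hhi, hgap, Or.inr ⟨hlo, rfl⟩⟩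

end Forecast

lemma BRPath.of_betterStep {P : ℕ} {β γ m μ Δs S t : ℝ} {s s' : ℕ → ℝ} {j : ℕ}
    (hs : GridProfile P Δs S s) (hs' : GridProfile P Δs S s')
    (h : BetterStep P β γ m μ s s' j t) : BRPath P β γ m μ Δs S s s' := by
  refine ⟨1, fun i => if i = 0 then s else s', by simp, by simp, ?_, ?_⟩
  · intro i _
    dsimp only
    split_ifs
    exacts [hs, hs']
  · intro i hi
    obtain rfl : i = 0 := by omega
    exact ⟨j, t, by simpa using h⟩

section FirstBlock

variable (m μ : ℝ) (s : ℕ → ℝ) (n : ℕ)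

/-- Since `arr` never falls below `s 0 + k * (m / μ)`, this is the last of the users `0, 1, …`
that are served back to back behind the first one. -/
noncomputable def firstBlockEnd : ℕ :=
  Nat.findGreatest (fun k => arr m μ s k ≤ s 0 + k * (m / μ)) n

lemma firstBlockEnd_le : firstBlockEnd m μ s n ≤ n :=
  Nat.findGreatest_le n

lemma arr_firstBlockEnd_le :
    arr m μ s (firstBlockEnd m μ s n) ≤ s 0 + firstBlockEnd m μ s n * (m / μ) :=
  Nat.findGreatest_spec (P := fun k => arr m μ s k ≤ s 0 + k * (m / μ)) (Nat.zero_le n)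
    (by simp [arr])

variable {m μ s n}

lemma arr_firstBlockEnd_add_lt (h : firstBlockEnd m μ s n + 1 ≤ n) :
    arr m μ s (firstBlockEnd m μ s n) + m / μ < arr m μ s (firstBlockEnd m μ s n + 1) := by
  have hnot : ¬ arr m μ s (firstBlockEnd m μ s n + 1) ≤
      s 0 + ((firstBlockEnd m μ s n + 1 : ℕ) : ℝ) * (m / μ) :=
    Nat.findGreatest_is_greatest (Nat.lt_succ_self _) h
  push_cast at hnot
  linarith [arr_firstBlockEnd_le m μ s n]

variable {Δs : ℝ}

lemma arr_firstBlockEnd_add_lt_succ (hΔm : Δs ≤ m / μ) (h : firstBlockEnd m μ s n + 1 ≤ n) :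
    arr m μ s (firstBlockEnd m μ s n) + Δs < s (firstBlockEnd m μ s n + 1) := by
  have hgap := arr_firstBlockEnd_add_lt h
  rw [← arr_succ_eq_of_gap hgap]
  linarith

end FirstBlock

section Equilibrium

variable (P : ℕ) (m μ β γ : ℝ)

lemma tplus_eq_tminus_add : tplus P m μ β γ = tminus P m μ β γ + ((P : ℝ) - 1) * (m / μ) := by
  unfold tplus
  ring

lemma gamma_mul_tplus (hβγ : β + γ ≠ 0) : γ * tplus P m μ β γ = -(β * tminus P m μ β γ) := by
  unfold tplus tminus
  field_simp
  ring

variable {P m μ β γ}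

lemma tminus_nonpos (hP : 1 ≤ P) (hmμ : 0 ≤ m / μ) (hβ : 0 ≤ β) (hγ : 0 ≤ γ) :
    tminus P m μ β γ ≤ 0 := by
  have hP' : (0 : ℝ) ≤ (P : ℝ) - 1 := by
    have : (1 : ℝ) ≤ P := by exact_mod_cast hP
    linarith
  have : 0 ≤ m * ((P : ℝ) - 1) / μ * (γ / (β + γ)) := by
    rw [mul_div_right_comm]
    exact mul_nonneg (mul_nonneg hmμ hP') (div_nonneg hγ (add_nonneg hβ hγ))
  unfold tminus
  linarith

lemma sdc_lt_sdc_of_lt_tminus (hP : 1 ≤ P) (hmμ : 0 ≤ m / μ) (hβ : 0 < β) (hγ : 0 < γ)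
    {a t : ℝ} (ha : a < tminus P m μ β γ) (hat : a < t) (ht : t ≤ tplus P m μ β γ) :
    sdc β γ t < sdc β γ a := by
  have hT := tminus_nonpos hP hmμ hβ.le hγ.le
  refine sdc_lt_sdc hβ (by linarith) hat ?_
  calc γ * t ≤ γ * tplus P m μ β γ := by gcongr
    _ = -(β * tminus P m μ β γ) := gamma_mul_tplus P m μ β γ (by positivity)
    _ < -(β * a) := by nlinarith

lemma sdc_tminus_lt_cost_last (hP : 0 < P) (hmμ : 0 ≤ m / μ) (hβ : 0 < β) (hγ : 0 < γ)
    {s : ℕ → ℝ} (hlt : tminus P m μ β γ < s 0) :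
    sdc β γ (tminus P m μ β γ) < cost β γ m μ s (P - 1) := by
  have harr : tplus P m μ β γ < arr m μ s (P - 1) := by
    have := add_mul_le_arr (m := m) (μ := μ) (s := s) (P - 1)
    rw [Nat.cast_pred hP] at this
    rw [tplus_eq_tminus_add]
    linarith
  calc sdc β γ (tminus P m μ β γ) = γ * tplus P m μ β γ := by
        rw [sdc_of_nonpos (tminus_nonpos hP hmμ hβ.le hγ.le),
          gamma_mul_tplus P m μ β γ (by positivity)]
    _ < γ * arr m μ s (P - 1) := by gcongr
    _ ≤ cost β γ m μ s (P - 1) := mul_arr_le_cost hβ.le hγ.le _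

end Equilibrium

section Adjustments

variable {P : ℕ} {m μ β γ Δs S : ℝ} {s : ℕ → ℝ}

lemma betterStep_last_prependSeq (hP : 0 < P) (hs : IsProfile P s) {t : ℝ} (ht : t < s 0)
    (hcost : sdc β γ t < cost β γ m μ s (P - 1)) :
    BetterStep P β γ m μ s (prependSeq t s) (P - 1) t := by
  refine ⟨by omega, fun k hk => (ht.trans_le (hs.le_of_le k.zero_le hk)).ne',
    ⟨_, forecast_of_lt_first ht, hcost⟩, ?_⟩
  obtain ⟨n, rfl⟩ : ∃ n, P = n + 1 := ⟨P - 1, by omega⟩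
  exact map_prependSeq_range_succ t s n

lemma betterStep_first_moveFirstTo_of_gap (hs : IsProfile P s) {r : ℕ} {t : ℝ} (hr : r < P)
    (hlo : arr m μ s r < t) (hhi : r + 1 < P → t < s (r + 1))
    (hgap : r + 1 < P → m / μ < arr m μ s (r + 1) - arr m μ s r)
    (hcost : sdc β γ t < sdc β γ (s 0)) :
    BetterStep P β γ m μ s (moveFirstTo s r t) 0 t := by
  have hfree : ∀ k < P, s k ≠ t := by
    intro k hk
    rcases le_or_gt k r with hkr | hkr
    · exact ((hs.le_of_le hkr hr).trans_lt ((le_arr r).trans_lt hlo)).ne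
    · exact ((hhi (by omega)).trans_le (hs.le_of_le hkr hk)).ne'
  have hforecast : Forecast P β γ m μ s t (sdc β γ t) := by
    by_cases hrP : r + 1 < P
    · exact forecast_of_mem_gap hrP (hgap hrP) hlo (hhi hrP)
    · have hlast : r = P - 1 := by omega
      exact forecast_of_arr_last_le (hlast ▸ hlo.le)
  exact ⟨by omega, hfree, ⟨_, hforecast, by rwa [cost_zero]⟩, map_moveFirstTo_range s hr t⟩

lemma arr_firstBlockEnd_add_le_tplus (hP : 0 < P) (hmμ : 0 ≤ m / μ) (hΔs : 0 < Δs)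
    (hgt : ∃ z : ℤ, tminus P m μ β γ = z * Δs) (hs0 : ∃ z : ℤ, s 0 = z * Δs)
    (hlt : s 0 < tminus P m μ β γ) :
    arr m μ s (firstBlockEnd m μ s (P - 1)) + Δs ≤ tplus P m μ β γ := by
  have hr : (firstBlockEnd m μ s (P - 1) : ℝ) ≤ (P : ℝ) - 1 := by
    rw [← Nat.cast_pred hP]
    exact_mod_cast firstBlockEnd_le m μ s (P - 1)
  have hs0Δ := add_le_of_lt_of_grid hΔs hs0 hgt hlt
  have := arr_firstBlockEnd_le m μ s (P - 1)
  rw [tplus_eq_tminus_add]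
  nlinarith

lemma exists_brPath_first_later (hP : 0 < P) (hm : 0 < m) (hμ : 0 < μ) (hβ : 0 < β)
    (hγ : 0 < γ) (hΔs : 0 < Δs) (hgm : ∃ z : ℤ, m / μ = z * Δs)
    (hgt : ∃ z : ℤ, tminus P m μ β γ = z * Δs) (hStp : tplus P m μ β γ < S)
    (hs : GridProfile P Δs S s) (hlt : s 0 < tminus P m μ β γ) :
    ∃ s', BRPath P β γ m μ Δs S s s' ∧ s 0 < s' 0 := by
  have hmμ : 0 < m / μ := div_pos hm hμ
  have hΔm : Δs ≤ m / μ := by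
    simpa using add_le_of_lt_of_grid hΔs ⟨0, by simp⟩ hgm hmμ
  set r := firstBlockEnd m μ s (P - 1)
  set t := arr m μ s r + Δs with ht
  have hr : r < P := by have := firstBlockEnd_le m μ s (P - 1); omega
  have harr : arr m μ s r < t := lt_add_of_pos_right _ hΔs
  have hsr : s r < t := (le_arr r).trans_lt harr
  have hnext : r + 1 < P → t < s (r + 1) := fun h =>
    arr_firstBlockEnd_add_lt_succ hΔm (by omega)
  have hgap : r + 1 < P → m / μ < arr m μ s (r + 1) - arr m μ s r := fun h => by
    linarith [arr_firstBlockEnd_add_lt (m := m) (μ := μ) (n := P - 1) (s := s) (by omega)]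
  have hs0 : s 0 < t := (hs.1.le_of_le r.zero_le hr).trans_lt hsr
  have htp : t ≤ tplus P m μ β γ :=
    arr_firstBlockEnd_add_le_tplus hP hmμ.le hΔs hgt (hs.2 0 hP).1 hlt
  have htgrid : (∃ z : ℤ, t = z * Δs) ∧ -S ≤ t ∧ t ≤ S := by
    obtain ⟨z, hz⟩ := exists_arr_eq_int_mul hgm r fun i hi => (hs.2 i (by omega)).1
    exact ⟨⟨z + 1, by rw [ht, hz]; push_cast; ring⟩, by linarith [(hs.2 0 hP).2.1], by linarith⟩
  have hcost : sdc β γ t < sdc β γ (s 0) :=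
    sdc_lt_sdc_of_lt_tminus hP hmμ.le hβ hγ hlt hs0 htp
  refine ⟨moveFirstTo s r t, BRPath.of_betterStep hs
    ⟨hs.1.moveFirstTo hr hsr hnext, hs.2.moveFirstTo hr htgrid⟩
    (betterStep_first_moveFirstTo_of_gap hs.1 hr harr hnext hgap hcost), ?_⟩
  rcases r.eq_zero_or_pos with hr0 | hr0
  · simpa [moveFirstTo, hr0] using hs0
  · simpa [moveFirstTo, hr0] using hs.1 0 (by omega)

lemma brPath_prependSeq_tminus (hP : 0 < P) (hm : 0 < m) (hμ : 0 < μ) (hβ : 0 < β)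
    (hγ : 0 < γ) (hgt : ∃ z : ℤ, tminus P m μ β γ = z * Δs) (hSt : -S < tminus P m μ β γ)
    (hStp : tplus P m μ β γ < S) (hs : GridProfile P Δs S s) (hlt : tminus P m μ β γ < s 0) :
    BRPath P β γ m μ Δs S s (prependSeq (tminus P m μ β γ) s) := by
  have hmμ : 0 ≤ m / μ := (div_pos hm hμ).le
  have hTS : tminus P m μ β γ ≤ S := by
    have : (0 : ℝ) ≤ ((P : ℝ) - 1) * (m / μ) := by
      rw [← Nat.cast_pred hP]
      positivity
    linarith [tplus_eq_tminus_add P m μ β γ]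
  exact BRPath.of_betterStep hs ⟨hs.1.prependSeq hlt, hs.2.prependSeq ⟨hgt, hSt.le, hTS⟩⟩
    (betterStep_last_prependSeq hP hs.1 hlt (sdc_tminus_lt_cost_last hP hmμ hβ hγ hlt))

end Adjustments

theorem first_user_adjustment_general (P : ℕ) (hP : 2 ≤ P) (m μ β γ Δs S : ℝ)
    (hm : 0 < m) (hμ : 0 < μ)
    (hβ : 0 < β) (hγ : 0 < γ)
    (hΔs : 0 < Δs)
    (hgm : ∃ z : ℤ, m / μ = (z : ℝ) * Δs)
    (hgt : ∃ z : ℤ, tminus P m μ β γ = (z : ℝ) * Δs)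
    (hSt : -S < tminus P m μ β γ) (hStp : tplus P m μ β γ < S)
    (s : ℕ → ℝ) (hgrid : GridProfile P Δs S s)
    (hne : s 0 ≠ tminus P m μ β γ) :
    ∃ s' : ℕ → ℝ, BRPath P β γ m μ Δs S s s' ∧
      (s 0 < tminus P m μ β γ → s 0 < s' 0) ∧
      (tminus P m μ β γ < s 0 → s' 0 = tminus P m μ β γ) := by
  have hP0 : 0 < P := by omega
  rcases hne.lt_or_gt with hlt | hgt'
  · obtain ⟨s', hpath, hlater⟩ :=
      exists_brPath_first_later hP0 hm hμ hβ hγ hΔs hgm hgt hStp hgrid hlt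
    exact ⟨s', hpath, fun _ => hlater, fun h => absurd h hlt.not_gt⟩
  · exact ⟨_, brPath_prependSeq_tminus hP0 hm hμ hβ hγ hgt hSt hStp hgrid hgt',
      fun h => absurd h hgt'.not_gt, fun _ => if_pos rfl⟩

theorem first_user_adjustment (P : ℕ) (hP : 2 ≤ P) (m μ β γ Δs S : ℝ)
    (hm : 0 < m) (hm1 : m ≤ 1) (hμ : 0 < μ)
    (hβ : 0 < β) (hβ1 : β < 1) (hγ : 0 < γ)
    (hΔs : 0 < Δs) (hS : 0 < S)
    (hgm : ∃ z : ℤ, m / μ = (z : ℝ) * Δs)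
    (hgt : ∃ z : ℤ, tminus P m μ β γ = (z : ℝ) * Δs)
    (hgtp : ∃ z : ℤ, tplus P m μ β γ = (z : ℝ) * Δs)
    (hgse : ∀ k, k < P → ∃ z : ℤ, se P m μ β γ k = (z : ℝ) * Δs)
    (hSt : -S < tminus P m μ β γ) (hStp : tplus P m μ β γ < S)
    (s : ℕ → ℝ) (hgrid : GridProfile P Δs S s)
    (hne : s 0 ≠ tminus P m μ β γ) :
    ∃ s' : ℕ → ℝ, BRPath P β γ m μ Δs S s s' ∧
      (s 0 < tminus P m μ β γ → s 0 < s' 0) ∧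
      (tminus P m μ β γ < s 0 → s' 0 = tminus P m μ β γ) :=
  first_user_adjustment_general P hP m μ β γ Δs S hm hμ hβ hγ hΔs hgm hgt hSt hStp s hgrid hne
end
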